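/- arXiv:0810.4627 — 2 statements merged into one kernel-verified Lean document; each statement's English description precedes it below -/
import Mathlib

section
/- A code φ : X → Y between shift spaces is bi-closing if and only if there exists ε > 0 such that whenever x ≠ x̄ are two points with φ(x) = φ(x̄), then d(x, x̄) ≥ ε (i.e., each fiber is ε-separated). -/
open Set Function Filter

variable {A : Type*} {B : Type*} {C : Type*}

/-- The shift map on the full shift. -/
def shiftMap (x : ℤ → A) : ℤ → A := fun i => x (i + 1)

/-- A shift space (subshift): a closed shift-invariant subset of the full shift. -/
def IsSubshift [TopologicalSpace A] (X : Set (ℤ → A)) : Prop :=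
  IsClosed X ∧ shiftMap '' X = X

/-- The word `w` occurs in `x` at position `k`. -/
def OccursAt (x : ℤ → A) (k : ℤ) (w : List A) : Prop :=
  ∀ i : Fin w.length, x (k + ((i : ℕ) : ℤ)) = w.get i

/-- The word `w` belongs to the language of `X`. -/
def WordIn (X : Set (ℤ → A)) (w : List A) : Prop :=
  ∃ x ∈ X, ∃ k : ℤ, OccursAt x k w

/-- Irreducibility of a shift space. -/
def IrreducibleSubshift (X : Set (ℤ → A)) : Prop :=
  ∀ u v : List A, WordIn X u → WordIn X v → ∃ w : List A, WordIn X (u ++ w ++ v)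

/-- Nonwandering shift space. -/
def NonwanderingSubshift (X : Set (ℤ → A)) : Prop :=
  ∀ u : List A, WordIn X u → ∃ w : List A, WordIn X (u ++ w ++ u)

/-- A shift of finite type: defined by a finite set of forbidden words. -/
def IsSFT (X : Set (ℤ → A)) : Prop :=
  ∃ F : Finset (List A), X = {x : ℤ → A | ∀ w ∈ F, ∀ k : ℤ, ¬ OccursAt x k w}

/-- A (sliding block) code: a continuous shift-commuting map between shift spaces. -/
def IsCode [TopologicalSpace A] [TopologicalSpace B]
    {X : Set (ℤ → A)} {Y : Set (ℤ → B)} (φ : X → Y) : Prop :=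
  Continuous φ ∧
    ∀ (x : X) (hx : shiftMap (x : ℤ → A) ∈ X),
      ((φ ⟨shiftMap (x : ℤ → A), hx⟩ : Y) : ℤ → B) = shiftMap ((φ x : Y) : ℤ → B)

/-- A sofic shift: a factor of a shift of finite type. -/
def IsSofic [TopologicalSpace A] (Y : Set (ℤ → A)) : Prop :=
  ∃ (n : ℕ) (Z : Set (ℤ → Fin n)), IsSubshift Z ∧ IsSFT Z ∧
    ∃ ψ : Z → Y, IsCode ψ ∧ Function.Surjective ψ

/-- Two points are left asymptotic if they agree on all sufficiently negative coordinates. -/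
def LeftAsymptotic (x y : ℤ → A) : Prop := ∃ N : ℤ, ∀ i ≤ N, x i = y i

/-- Two points are right asymptotic if they agree on all sufficiently positive coordinates. -/
def RightAsymptotic (x y : ℤ → A) : Prop := ∃ N : ℤ, ∀ i, N ≤ i → x i = y i

/-- A code is right closing if it never collapses two distinct left asymptotic points. -/
def RightClosing {X : Set (ℤ → A)} {Y : Set (ℤ → B)} (φ : X → Y) : Prop :=
  ∀ x x' : X, LeftAsymptotic (x : ℤ → A) (x' : ℤ → A) → φ x = φ x' → x = x'

/-- A code is left closing if it never collapses two distinct right asymptotic points. -/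
def LeftClosing {X : Set (ℤ → A)} {Y : Set (ℤ → B)} (φ : X → Y) : Prop :=
  ∀ x x' : X, RightAsymptotic (x : ℤ → A) (x' : ℤ → A) → φ x = φ x' → x = x'

/-- Bi-closing: both right and left closing. -/
def BiClosing {X : Set (ℤ → A)} {Y : Set (ℤ → B)} (φ : X → Y) : Prop :=
  RightClosing φ ∧ LeftClosing φ

/-- Finite-to-one map. -/
def FiniteToOne {α β : Type*} (φ : α → β) : Prop := ∀ y : β, (φ ⁻¹' {y}).Finite

/-- Every fiber has exactly `d` elements. -/
def ExactlyDToOne {α β : Type*} (φ : α → β) (d : ℕ) : Prop :=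
  ∀ y : β, (φ ⁻¹' {y}).Finite ∧ Nat.card (φ ⁻¹' {y}) = d

/-- Constant-to-one map. -/
def ConstantToOne {α β : Type*} (φ : α → β) : Prop := ∃ d : ℕ, ExactlyDToOne φ d

/-- A doubly transitive point: every word of `Y` occurs infinitely often to the left
and to the right. -/
def DoublyTransitive (Y : Set (ℤ → A)) (y : ℤ → A) : Prop :=
  ∀ w : List A, WordIn Y w → ∀ N : ℤ,
    (∃ k ≥ N, OccursAt y k w) ∧ (∃ k ≤ N, OccursAt y k w)

/-- The maximal nonwandering subshift of `X`. -/
def OmegaSet [TopologicalSpace A] (X : Set (ℤ → A)) : Set (ℤ → A) :=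
  ⋃₀ {Z : Set (ℤ → A) | Z ⊆ X ∧ IsSubshift Z ∧ NonwanderingSubshift Z}

/-- Topological entropy of a subshift, via the growth rate of the number of words. -/
noncomputable def subshiftEntropy (X : Set (ℤ → A)) : ℝ :=
  Filter.limsup
    (fun n : ℕ => Real.log (Nat.card {w : List A | w.length = n ∧ WordIn X w}) / n)
    Filter.atTop

/-- An irreducible component of `X`: a maximal nonempty irreducible subshift of `X`. -/
def IsIrreducibleComponent [TopologicalSpace A] (X X₀ : Set (ℤ → A)) : Prop :=
  X₀ ⊆ X ∧ IsSubshift X₀ ∧ X₀.Nonempty ∧ IrreducibleSubshift X₀ ∧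
    ∀ Z : Set (ℤ → A), Z ⊆ X → IsSubshift Z → IrreducibleSubshift Z → X₀ ⊆ Z → Z = X₀

-- The metric on a shift space: `d(x,y) = 2^{-k}` where `k` is maximal with
-- `x` and `y` agreeing on `[-k,k]`, and `0` if `x = y`.
open Classical in
noncomputable def shiftDist (x y : ℤ → A) : ℝ :=
  if x = y then 0
  else (2 : ℝ) ^ (-((sSup {n : ℕ | ∀ i : ℤ, |i| ≤ (n : ℤ) → x i = y i} : ℕ) : ℤ))

/-!
By compactness, a right closing code has a memory `k`: points of a fiber agreeing on
`[m - k, m)` agree at `m`. Points of a fiber agreeing on `[-k, k]` therefore agree on all of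
`[0, ∞)`, so they are right asymptotic and left closing makes them equal. Conversely, if
windows of width `k` separate fibers, two asymptotic points of a fiber agree on some window of
width `k`, hence, after shifting it to the centre, coincide.
-/

def shiftBy (m : ℤ) (x : ℤ → A) : ℤ → A := fun i => x (i + m)

@[simp]
lemma shiftBy_apply (m i : ℤ) (x : ℤ → A) : shiftBy m x i = x (i + m) := rfl

lemma shiftBy_shiftBy (a b : ℤ) (x : ℤ → A) : shiftBy a (shiftBy b x) = shiftBy (a + b) x :=
  funext fun i => by simp only [shiftBy_apply, add_assoc]

lemma shiftBy_zero (x : ℤ → A) : shiftBy 0 x = x := funext fun i => by simp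

lemma shiftBy_one : (shiftBy 1 : (ℤ → A) → ℤ → A) = shiftMap := rfl

lemma shiftBy_injective (m : ℤ) : Injective (shiftBy m : (ℤ → A) → ℤ → A) := fun x y h => by
  rw [← shiftBy_zero x, ← shiftBy_zero y, ← neg_add_cancel m, ← shiftBy_shiftBy,
    ← shiftBy_shiftBy, h]

section ShiftInvariant

variable {X : Set (ℤ → A)}

lemma shiftBy_mem (hX : shiftMap '' X = X) (m : ℤ) {x : ℤ → A} (hx : x ∈ X) :
    shiftBy m x ∈ X := by
  induction m using Int.induction_on with
  | zero => rwa [shiftBy_zero]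
  | succ i ih =>
    rw [add_comm, ← shiftBy_shiftBy, shiftBy_one, ← hX]
    exact mem_image_of_mem _ ih
  | pred i ih =>
    rw [← hX] at ih
    obtain ⟨z, hz, hzx⟩ := ih
    rwa [sub_eq_neg_add, ← shiftBy_shiftBy, ← hzx, ← shiftBy_one, shiftBy_shiftBy,
      neg_add_cancel, shiftBy_zero]

def shiftOn (hX : shiftMap '' X = X) (m : ℤ) (x : X) : X := ⟨shiftBy m x, shiftBy_mem hX m x.2⟩

lemma shiftOn_add (hX : shiftMap '' X = X) (a b : ℤ) (x : X) :
    shiftOn hX (a + b) x = shiftOn hX a (shiftOn hX b x) :=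
  Subtype.ext (shiftBy_shiftBy a b (x : ℤ → A)).symm

lemma IsCode.coe_apply_shiftOn [TopologicalSpace A] [TopologicalSpace B] {Y : Set (ℤ → B)}
    {φ : X → Y} (hφ : IsCode φ) (hX : shiftMap '' X = X) (m : ℤ) (x : X) :
    (φ (shiftOn hX m x) : ℤ → B) = shiftBy m (φ x) := by
  have shift_one : ∀ z : X, (φ (shiftOn hX 1 z) : ℤ → B) = shiftBy 1 (φ z) := fun z =>
    hφ.2 z _
  induction m using Int.induction_on with
  | zero => simp only [shiftOn, shiftBy_zero]
  | succ i ih => rw [add_comm, shiftOn_add, shift_one, ih, shiftBy_shiftBy]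
  | pred i ih =>
    have h := shift_one (shiftOn hX (-i - 1) x)
    rw [← shiftOn_add, add_sub_cancel, ih] at h
    rw [← shiftBy_zero (φ _ : ℤ → B), ← neg_add_cancel 1, ← shiftBy_shiftBy, ← h,
      shiftBy_shiftBy, sub_eq_neg_add]

lemma IsCode.apply_shiftOn_eq [TopologicalSpace A] [TopologicalSpace B] {Y : Set (ℤ → B)}
    {φ : X → Y} (hφ : IsCode φ) (hX : shiftMap '' X = X) (m : ℤ) {x x' : X} (h : φ x = φ x') :
    φ (shiftOn hX m x) = φ (shiftOn hX m x') :=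
  Subtype.ext (by rw [hφ.coe_apply_shiftOn, hφ.coe_apply_shiftOn, h])

end ShiftInvariant

lemma bddAbove_setOf_eqOn_of_ne {x y : ℤ → A} (h : x ≠ y) :
    BddAbove {n : ℕ | ∀ i : ℤ, |i| ≤ (n : ℤ) → x i = y i} := by
  obtain ⟨j, hj⟩ := Function.ne_iff.mp h
  refine ⟨j.natAbs, fun n hn => ?_⟩
  by_contra! hlt
  exact hj (hn j (by rw [Int.abs_eq_natAbs]; exact_mod_cast hlt.le))

lemma shiftDist_le_of_eqOn {x y : ℤ → A} (h : x ≠ y) {k : ℕ}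
    (hk : EqOn x y (Icc (-k) k)) : shiftDist x y ≤ (2 : ℝ) ^ (-(k : ℤ)) := by
  rw [shiftDist, if_neg h]
  have hle : k ≤ sSup {n : ℕ | ∀ i : ℤ, |i| ≤ (n : ℤ) → x i = y i} :=
    le_csSup (bddAbove_setOf_eqOn_of_ne h) fun i hi => hk (abs_le.mp hi)
  exact zpow_le_zpow_right₀ one_le_two (by omega)

lemma eqOn_of_shiftDist_lt {x y : ℤ → A} {k : ℕ} (hd : shiftDist x y < (2 : ℝ) ^ (-(k : ℤ))) :
    EqOn x y (Icc (-k) k) := by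
  by_cases h : x = y
  · exact h ▸ eqOn_refl x _
  rw [shiftDist, if_neg h, zpow_lt_zpow_iff_right₀ one_lt_two, neg_lt_neg_iff,
    Nat.cast_lt] at hd
  obtain ⟨n, hn, hkn⟩ := exists_lt_of_lt_csSup' hd
  exact fun i ⟨hi₁, hi₂⟩ => hn i (abs_le.mpr ⟨by omega, by omega⟩)

def FibersSeparatedByWindow {X : Set (ℤ → A)} {β : Type*} (φ : X → β) (k : ℕ) : Prop :=
  ∀ x x' : X, φ x = φ x' → EqOn (x : ℤ → A) x' (Icc (-k) k) → x = x'

lemma exists_pos_le_shiftDist_iff {X : Set (ℤ → A)} {β : Type*} (φ : X → β) :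
    (∃ ε : ℝ, 0 < ε ∧ ∀ x x' : X, φ x = φ x' → x ≠ x' → ε ≤ shiftDist (x : ℤ → A) x') ↔
      ∃ k, FibersSeparatedByWindow φ k := by
  constructor
  · rintro ⟨ε, hε, hsep⟩
    obtain ⟨k, hk⟩ := exists_pow_lt_of_lt_one hε (by norm_num : (2⁻¹ : ℝ) < 1)
    refine ⟨k, fun x x' hφx hx => by_contra fun hne => ?_⟩
    have hd := shiftDist_le_of_eqOn (Subtype.coe_ne_coe.mpr hne) hx
    rw [zpow_neg, zpow_natCast, ← inv_pow] at hd
    linarith [hsep x x' hφx hne]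
  · rintro ⟨k, hk⟩
    exact ⟨_, by positivity, fun x x' hφx hne =>
      not_lt.mp fun hd => hne (hk x x' hφx (eqOn_of_shiftDist_lt hd))⟩

lemma eqOn_Ici_of_eqOn_Ico {x y : ℤ → A} {k : ℕ} {a : ℤ}
    (hstep : ∀ m, EqOn x y (Ico (m - k) m) → x m = y m) (h : EqOn x y (Ico a (a + k))) :
    EqOn x y (Ici a) := by
  have hgrow : ∀ n : ℕ, EqOn x y (Ico a (a + k + n)) := by
    intro n
    induction n with
    | zero => simpa using h
    | succ n ih =>
      intro i ⟨hi₁, hi₂⟩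
      rcases lt_or_eq_of_le (show i ≤ a + k + n by push_cast at hi₂; omega) with hi | rfl
      · exact ih ⟨hi₁, hi⟩
      · exact hstep _ fun j ⟨hj₁, hj₂⟩ => ih ⟨by omega, hj₂⟩
  intro i hi
  exact hgrow ((i - a).toNat + 1) ⟨hi, by have := mem_Ici.mp hi; push_cast; omega⟩

section Window

variable [TopologicalSpace A] [TopologicalSpace B] {X : Set (ℤ → A)} {Y : Set (ℤ → B)}
  {φ : X → Y} {k : ℕ}

lemma FibersSeparatedByWindow.eq_of_eqOn (h : FibersSeparatedByWindow φ k)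
    (hX : shiftMap '' X = X) (hφ : IsCode φ) {x x' : X} (hφx : φ x = φ x') {m : ℤ}
    (hx : EqOn (x : ℤ → A) x' (Icc (m - k) (m + k))) : x = x' := by
  have hshift := h _ _ (hφ.apply_shiftOn_eq hX m hφx) fun i ⟨hi₁, hi₂⟩ =>
    hx ⟨by omega, by omega⟩
  exact Subtype.ext (shiftBy_injective m (congrArg Subtype.val hshift))

lemma FibersSeparatedByWindow.biClosing (h : FibersSeparatedByWindow φ k)
    (hX : shiftMap '' X = X) (hφ : IsCode φ) : BiClosing φ := by
  constructor
  · rintro x x' ⟨N, hN⟩ hφx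
    exact h.eq_of_eqOn hX hφ hφx (m := N - k) fun i ⟨_, hi⟩ => hN i (by omega)
  · rintro x x' ⟨N, hN⟩ hφx
    exact h.eq_of_eqOn hX hφ hφx (m := N + k) fun i ⟨hi, _⟩ => hN i (by omega)

lemma isClopen_setOf_coord_eq [DiscreteTopology A] (i : ℤ) :
    IsClopen {p : X × X | (p.1 : ℤ → A) i = (p.2 : ℤ → A) i} := by
  have hcoord : Continuous fun p : X × X => ((p.1 : ℤ → A) i, (p.2 : ℤ → A) i) :=
    ((continuous_apply i).comp (continuous_subtype_val.comp continuous_fst)).prodMk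
      ((continuous_apply i).comp (continuous_subtype_val.comp continuous_snd))
  exact (isClopen_discrete {q : A × A | q.1 = q.2}).preimage hcoord

lemma RightClosing.exists_window [DiscreteTopology A] [T2Space B] (hX : IsCompact X)
    (hφ : Continuous φ) (h : RightClosing φ) :
    ∃ k : ℕ, ∀ x x' : X, φ x = φ x' → EqOn (x : ℤ → A) x' (Ico (-k) 0) →
      (x : ℤ → A) 0 = (x' : ℤ → A) 0 := by
  have : CompactSpace X := isCompact_iff_compactSpace.mp hX
  by_contra! hbad
  let S : ℕ → Set (X × X) := fun k =>
    {p | φ p.1 = φ p.2} ∩ (⋂ i ∈ Ico (-k : ℤ) 0, {p | (p.1 : ℤ → A) i = (p.2 : ℤ → A) i}) ∩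
      {p | (p.1 : ℤ → A) 0 = (p.2 : ℤ → A) 0}ᶜ
  have hS_closed : ∀ k, IsClosed (S k) := fun k =>
    ((isClosed_eq (hφ.comp continuous_fst) (hφ.comp continuous_snd)).inter
      (isClosed_biInter fun i _ => (isClopen_setOf_coord_eq i).isClosed)).inter
      (isClopen_setOf_coord_eq 0).compl.isClosed
  have hS_anti : ∀ k, S (k + 1) ⊆ S k := fun k p ⟨⟨hφp, hp⟩, hp0⟩ =>
    ⟨⟨hφp, mem_iInter₂.mpr fun i ⟨hi, hi'⟩ =>
      mem_iInter₂.mp hp i ⟨by push_cast at hi ⊢; omega, hi'⟩⟩, hp0⟩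
  have hS_nonempty : ∀ k, (S k).Nonempty := fun k => by
    obtain ⟨x, x', hφx, hx, hx0⟩ := hbad k
    exact ⟨(x, x'), ⟨hφx, mem_iInter₂.mpr hx⟩, hx0⟩
  obtain ⟨p, hp⟩ := IsCompact.nonempty_iInter_of_sequence_nonempty_isCompact_isClosed S hS_anti
    hS_nonempty (hS_closed 0).isCompact hS_closed
  have hasymp : LeftAsymptotic (p.1 : ℤ → A) p.2 := ⟨-1, fun i hi =>
    mem_iInter₂.mp (mem_iInter.mp hp i.natAbs).1.2 i ⟨by omega, by omega⟩⟩
  have hp0 := mem_iInter.mp hp 0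
  exact hp0.2 (congrFun (congrArg Subtype.val (h _ _ hasymp hp0.1.1)) 0)

lemma BiClosing.exists_fibersSeparatedByWindow [DiscreteTopology A] [T2Space B]
    (hXc : IsCompact X) (hX : shiftMap '' X = X) (hφ : IsCode φ) (h : BiClosing φ) :
    ∃ k, FibersSeparatedByWindow φ k := by
  obtain ⟨k, hk⟩ := h.1.exists_window hXc hφ.1
  refine ⟨k, fun x x' hφx hx => h.2 x x' ⟨0, fun i hi => ?_⟩ hφx⟩
  have hstep : ∀ m, EqOn (x : ℤ → A) x' (Ico (m - k) m) → (x : ℤ → A) m = (x' : ℤ → A) m :=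
    fun m hm => by
      have := hk _ _ (hφ.apply_shiftOn_eq hX m hφx) fun j ⟨hj₁, hj₂⟩ =>
        hm ⟨by omega, by omega⟩
      simpa [shiftOn] using this
  exact eqOn_Ici_of_eqOn_Ico hstep (fun j ⟨hj₁, hj₂⟩ => hx ⟨by omega, by omega⟩) hi

end Window

theorem biclosing_iff_separated_fibers_general {A : Type*} {B : Type*} [Finite A] [TopologicalSpace A] [DiscreteTopology A]
    [TopologicalSpace B] [DiscreteTopology B]
    {X : Set (ℤ → A)} {Y : Set (ℤ → B)} (hX : IsSubshift X)
    (φ : X → Y) (hφ : IsCode φ) :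
    BiClosing φ ↔ ∃ ε : ℝ, 0 < ε ∧ ∀ x x' : X, φ x = φ x' → x ≠ x' →
      ε ≤ shiftDist (x : ℤ → A) (x' : ℤ → A) := by
  rw [exists_pos_le_shiftDist_iff]
  exact ⟨(·.exists_fibersSeparatedByWindow hX.1.isCompact hX.2 hφ),
    fun ⟨_, hk⟩ => hk.biClosing hX.2 hφ⟩

theorem biclosing_iff_separated_fibers {A : Type*} {B : Type*} [Finite A] [TopologicalSpace A] [DiscreteTopology A]
    [Finite B] [TopologicalSpace B] [DiscreteTopology B]
    {X : Set (ℤ → A)} {Y : Set (ℤ → B)} (hX : IsSubshift X) (hY : IsSubshift Y)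
    (φ : X → Y) (hφ : IsCode φ) :
    BiClosing φ ↔ ∃ ε : ℝ, 0 < ε ∧ ∀ x x' : X, φ x = φ x' → x ≠ x' →
      ε ≤ shiftDist (x : ℤ → A) (x' : ℤ → A) :=
  biclosing_iff_separated_fibers_general hX φ hφ
end

section
/- If φ : X → Y is an open bi-closing code between shift spaces, then φ is a local homeomorphism. -/
open Set Function Filter

variable {A : Type*} {B : Type*} {C : Type*}

/-!
If φ is right closing, then along a fibre of φ the coordinate `0` is determined by the coordinates
`< 0`; by compactness of `X × X` already by those in a finite window `[-M, -1]`, and by shift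
invariance the same holds at every coordinate. Symmetrically, left
closing determines each coordinate from the next `M` ones. Hence two points of one fibre that agree
on `[-M, M]` agree everywhere, so `φ` is injective on cylinders, and a continuous open map that is
injective on a neighbourhood of each point is a local homeomorphism.
-/

theorem IsLocallyInjective.isLocalHomeomorph {X Y : Type*} [TopologicalSpace X]
    [TopologicalSpace Y] {f : X → Y} (hf : IsLocallyInjective f) (hc : Continuous f)
    (ho : IsOpenMap f) : IsLocalHomeomorph f := by
  refine isLocalHomeomorph_iff_isOpenEmbedding_restrict.mpr fun x => ?_
  obtain ⟨U, hU, hxU, hinj⟩ := hf x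
  exact ⟨U, hU.mem_nhds hxU, .of_continuous_injective_isOpenMap (hc.comp continuous_subtype_val)
    hinj.injective (ho.domRestrict hU)⟩

lemma shiftMap_injective : Injective (shiftMap : (ℤ → A) → ℤ → A) := fun x y h =>
  funext fun i => by simpa [shiftMap] using congrFun h (i - 1)

def FiberDeterminedAt {X : Set (ℤ → A)} {Y : Set (ℤ → B)} (φ : X → Y) (W : Set ℤ) (j : ℤ) :
    Prop :=
  ∀ x x' : X, φ x = φ x' → (∀ i ∈ W, (x : ℤ → A) (j + i) = (x' : ℤ → A) (j + i)) →
    (x : ℤ → A) j = (x' : ℤ → A) j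

section FiberDeterminedAt

variable {X : Set (ℤ → A)} {Y : Set (ℤ → B)} {φ : X → Y} {W W' : Set ℤ} {j : ℤ}

lemma FiberDeterminedAt.mono (h : FiberDeterminedAt φ W j) (hW : W ⊆ W') :
    FiberDeterminedAt φ W' j :=
  fun x x' hφ hagree => h x x' hφ fun i hi => hagree i (hW hi)

lemma fiberDeterminedAt_add_one_iff [TopologicalSpace A] [TopologicalSpace B]
    (hX : shiftMap '' X = X) (hφ : IsCode φ) :
    FiberDeterminedAt φ W (j + 1) ↔ FiberDeterminedAt φ W j := by
  have hshift : ∀ x ∈ X, shiftMap x ∈ X := fun x hx => hX ▸ mem_image_of_mem _ hx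
  constructor
  · rintro h ⟨x, hx⟩ ⟨x', hx'⟩ hφx hagree
    obtain ⟨z, hz, rfl⟩ : x ∈ shiftMap '' X := hX.symm ▸ hx
    obtain ⟨z', hz', rfl⟩ : x' ∈ shiftMap '' X := hX.symm ▸ hx'
    have hφz : φ ⟨z, hz⟩ = φ ⟨z', hz'⟩ := by
      refine Subtype.ext (shiftMap_injective ?_)
      rw [← hφ.2 ⟨z, hz⟩ hx, ← hφ.2 ⟨z', hz'⟩ hx', hφx]
    exact h _ _ hφz fun i hi => by simpa [shiftMap, add_right_comm] using hagree i hi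
  · intro h x x' hφx hagree
    have hφσ : φ ⟨shiftMap x, hshift x x.2⟩ = φ ⟨shiftMap x', hshift x' x'.2⟩ :=
      Subtype.ext (by rw [hφ.2, hφ.2, hφx])
    exact h _ _ hφσ fun i hi => by simpa [shiftMap, add_right_comm] using hagree i hi

lemma fiberDeterminedAt_iff_zero [TopologicalSpace A] [TopologicalSpace B]
    (hX : shiftMap '' X = X) (hφ : IsCode φ) :
    FiberDeterminedAt φ W j ↔ FiberDeterminedAt φ W 0 := by
  induction j using Int.induction_on with
  | zero => rfl
  | succ n ih => rw [fiberDeterminedAt_add_one_iff hX hφ, ih]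
  | pred n ih => rw [← ih, ← fiberDeterminedAt_add_one_iff hX hφ, sub_add_cancel]

lemma FiberDeterminedAt.eventually_inter_Icc [Finite A] [TopologicalSpace A]
    [DiscreteTopology A] [TopologicalSpace B] [T2Space B] (hX : IsClosed X) (hφ : Continuous φ)
    (h : FiberDeterminedAt φ W j) :
    ∀ᶠ M : ℕ in atTop, FiberDeterminedAt φ (W ∩ Icc (-M : ℤ) M) j := by
  have : CompactSpace X := isCompact_iff_compactSpace.mp hX.isCompact
  let bad : ℕ → Set (X × X) := fun M => {p | φ p.1 = φ p.2} ∩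
    (⋂ i ∈ W ∩ Icc (-M : ℤ) M, {p | (p.1 : ℤ → A) (j + i) = (p.2 : ℤ → A) (j + i)}) ∩
    {p | (p.1 : ℤ → A) j ≠ (p.2 : ℤ → A) j}
  have hcoord (i : ℤ) : Continuous fun z : X => (z : ℤ → A) i :=
    (continuous_apply i).comp continuous_subtype_val
  have hclosed (M : ℕ) : IsClosed (bad M) := by
    refine ((isClosed_eq (by fun_prop) (by fun_prop)).inter
      (isClosed_biInter fun i _ =>
        isClosed_eq ((hcoord _).comp continuous_fst) ((hcoord _).comp continuous_snd))).inter ?_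
    exact (isClosed_discrete {q : A × A | q.1 ≠ q.2}).preimage
      (((hcoord j).comp continuous_fst).prodMk ((hcoord j).comp continuous_snd))
  have hanti : Antitone bad := fun M M' hMM' =>
    inter_subset_inter_left _ <| inter_subset_inter_right _ <|
      biInter_subset_biInter_left fun i hi => ⟨hi.1, by grind⟩
  have hempty : univ ∩ ⋂ M, bad M = ∅ := by
    refine eq_empty_of_forall_notMem fun p hp => ?_
    simp only [bad, mem_inter_iff, mem_iInter] at hp
    exact hp.2 0 |>.2 <| h p.1 p.2 (hp.2 0).1.1 fun i hi =>
      (hp.2 i.natAbs).1.2 i ⟨hi, by grind⟩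
  obtain ⟨M₀, hM₀⟩ := isCompact_univ.elim_directed_family_closed bad hclosed hempty
    hanti.directed_ge
  refine eventually_atTop.2 ⟨M₀, fun M hM => ?_⟩
  refine FiberDeterminedAt.mono (W := W ∩ Icc (-M₀ : ℤ) M₀) ?_ fun i hi => ⟨hi.1, by grind⟩
  intro x x' hφx hagree
  by_contra hne
  exact eq_empty_iff_forall_notMem.1 hM₀ (x, x') ⟨trivial, ⟨hφx, by simpa using hagree⟩, hne⟩

end FiberDeterminedAt

section Closing

variable {X : Set (ℤ → A)} {Y : Set (ℤ → B)} {φ : X → Y}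

lemma RightClosing.fiberDeterminedAt_Iio (h : RightClosing φ) : FiberDeterminedAt φ (Iio 0) 0 :=
  fun x x' hφx hagree => by
    rw [h x x' ⟨-1, fun i hi => by simpa using hagree i (by grind)⟩ hφx]

lemma LeftClosing.fiberDeterminedAt_Ioi (h : LeftClosing φ) : FiberDeterminedAt φ (Ioi 0) 0 :=
  fun x x' hφx hagree => by
    rw [h x x' ⟨1, fun i hi => by simpa using hagree i (by grind)⟩ hφx]

lemma eventually_forall_fiberDeterminedAt [Finite A] [TopologicalSpace A] [DiscreteTopology A]
    [TopologicalSpace B] [T2Space B] {W : Set ℤ} (hX : IsSubshift X) (hφ : IsCode φ)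
    (h : FiberDeterminedAt φ W 0) :
    ∀ᶠ M : ℕ in atTop, ∀ j, FiberDeterminedAt φ (W ∩ Icc (-M : ℤ) M) j :=
  (h.eventually_inter_Icc hX.1 hφ.1).mono fun _ hM _ => (fiberDeterminedAt_iff_zero hX.2 hφ).2 hM

lemma forall_of_forall_Icc_of_windows {P : ℤ → Prop} {M : ℕ} (hinit : ∀ i ∈ Icc (-M : ℤ) M, P i)
    (hright : ∀ k, (∀ i ∈ Iio 0 ∩ Icc (-M : ℤ) M, P (k + i)) → P k)
    (hleft : ∀ k, (∀ i ∈ Ioi 0 ∩ Icc (-M : ℤ) M, P (k + i)) → P k) (k : ℤ) : P k := by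
  have hgrow (n : ℕ) : ∀ k ∈ Icc (-(M + n) : ℤ) (M + n), P k := by
    induction n with
    | zero => simpa using hinit
    | succ n ih =>
      intro k hk
      simp only [mem_Icc, mem_inter_iff, mem_Iio, mem_Ioi] at hk ih hright hleft ⊢
      rcases lt_or_ge 0 k with hk0 | hk0
      · exact hright k fun i hi => ih _ (by omega)
      · exact hleft k fun i hi => ih _ (by omega)
  exact hgrow k.natAbs k (by simp only [mem_Icc]; omega)

theorem BiClosing.exists_fiber_separated [Finite A] [TopologicalSpace A] [DiscreteTopology A]
    [TopologicalSpace B] [T2Space B] (hX : IsSubshift X) (hφ : IsCode φ) (hbc : BiClosing φ) :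
    ∃ N : ℕ, ∀ x x' : X, φ x = φ x' →
      (∀ i ∈ Icc (-N : ℤ) N, (x : ℤ → A) i = (x' : ℤ → A) i) → x = x' := by
  obtain ⟨N, hright, hleft⟩ :=
    ((eventually_forall_fiberDeterminedAt hX hφ hbc.1.fiberDeterminedAt_Iio).and
      (eventually_forall_fiberDeterminedAt hX hφ hbc.2.fiberDeterminedAt_Ioi)).exists
  exact ⟨N, fun x x' hφx hagree => Subtype.ext <| funext <|
    forall_of_forall_Icc_of_windows hagree (fun k => hright k x x' hφx) (fun k => hleft k x x' hφx)⟩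

end Closing

theorem open_biclosing_is_local_homeo_general {A : Type*} {B : Type*} [Finite A] [TopologicalSpace A] [DiscreteTopology A]
    [TopologicalSpace B] [DiscreteTopology B]
    {X : Set (ℤ → A)} {Y : Set (ℤ → B)} (hX : IsSubshift X)
    (φ : X → Y) (hφ : IsCode φ)
    (hopen : IsOpenMap φ) (hbc : BiClosing φ) :
    IsLocalHomeomorph φ := by
  obtain ⟨N, hN⟩ := hbc.exists_fiber_separated hX hφ
  refine IsLocallyInjective.isLocalHomeomorph (fun x => ?_) hφ.1 hopen
  refine ⟨Subtype.val ⁻¹' (Icc (-N : ℤ) N).pi fun i => {(x : ℤ → A) i}, ?_, fun _ _ => rfl, ?_⟩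
  · exact (isOpen_set_pi (finite_Icc _ _) fun _ _ => isOpen_discrete _).preimage
      continuous_subtype_val
  · exact fun z hz z' hz' hφz => hN z z' hφz fun i hi => (hz i hi).trans (hz' i hi).symm

theorem open_biclosing_is_local_homeo {A : Type*} {B : Type*} [Finite A] [TopologicalSpace A] [DiscreteTopology A]
    [Finite B] [TopologicalSpace B] [DiscreteTopology B]
    {X : Set (ℤ → A)} {Y : Set (ℤ → B)} (hX : IsSubshift X) (hY : IsSubshift Y)
    (φ : X → Y) (hφ : IsCode φ)
    (hopen : IsOpenMap φ) (hbc : BiClosing φ) :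
    IsLocalHomeomorph φ :=
  open_biclosing_is_local_homeo_general hX φ hφ hopen hbc
end
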